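/- Let U, Ũ be admissible MHD states with gamma-law EOS, and let a_i = max{𝓡_i(U), 𝓡_i(Ũ)} where 𝓡_i(U) = |v_i| + 𝒞_i is the spectral radius bound with 𝒞_i = (1/√2)[𝒞_s² + |B|²/ρ + √((𝒞_s² + |B|²/ρ)² - 4𝒞_s²B_i²/ρ)]^{1/2} and 𝒞_s = √(γp/ρ). Then the PP wave-speed bound satisfies α_i(U, Ũ) ≤ a_i + min{||v_i| - |ṽ_i||, |𝓒_i - 𝓒̃_i|} + |B - B̃|/√(2(ρ + ρ̃)), where 𝓒_i is defined as 𝒞_i but with 𝓒_s = p/(ρ√(2e)) in place of 𝒞_s, and α_i(U, Ũ) = min_σ α_i(U, Ũ; σ) as in Lemma 2.5. (It is assumed and may be used that 𝓒_s ≤ 𝒞_s, hence 𝓒_i ≤ 𝒞_i.) -/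

import Mathlib

noncomputable section

/-- Squared Euclidean norm on ℝ³. -/
def nsq (a : Fin 3 → ℝ) : ℝ := ∑ i, (a i) ^ 2

/-- 𝓒_s = p/(ρ√(2e)) with p = (γ-1)ρe (gamma-law EOS). -/
def scrCs (γ ρ e : ℝ) : ℝ := ((γ - 1) * ρ * e) / (ρ * Real.sqrt (2 * e))

/-- 𝓒_i built from 𝓒_s. -/
def scrC (γ : ℝ) (i : Fin 3) (ρ e : ℝ) (B : Fin 3 → ℝ) : ℝ :=
  (1 / Real.sqrt 2) * Real.sqrt ((scrCs γ ρ e) ^ 2 + nsq B / ρ +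
    Real.sqrt (((scrCs γ ρ e) ^ 2 + nsq B / ρ) ^ 2 - 4 * (scrCs γ ρ e) ^ 2 * (B i) ^ 2 / ρ))

/-- Sound speed 𝒞_s = √(γp/ρ) with p = (γ-1)ρe. -/
def calCs (γ ρ e : ℝ) : ℝ := Real.sqrt (γ * ((γ - 1) * ρ * e) / ρ)

/-- Fast magnetosonic speed 𝒞_i built from the sound speed 𝒞_s. -/
def calC (γ : ℝ) (i : Fin 3) (ρ e : ℝ) (B : Fin 3 → ℝ) : ℝ :=
  (1 / Real.sqrt 2) * Real.sqrt ((calCs γ ρ e) ^ 2 + nsq B / ρ +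
    Real.sqrt (((calCs γ ρ e) ^ 2 + nsq B / ρ) ^ 2 - 4 * (calCs γ ρ e) ^ 2 * (B i) ^ 2 / ρ))

/-- f(U, Ũ; σ) = (|B̃ - B|/√2)√(σ²/ρ + (1-σ)²/ρ̃). -/
def ffun (ρ ρ' : ℝ) (B B' : Fin 3 → ℝ) (σ : ℝ) : ℝ :=
  (Real.sqrt (nsq (B' - B)) / Real.sqrt 2) * Real.sqrt (σ ^ 2 / ρ + (1 - σ) ^ 2 / ρ')

/-- α_i(U, Ũ; σ). -/
def alphafun (γ : ℝ) (i : Fin 3) (ρ e ρ' e' : ℝ) (v B v' B' : Fin 3 → ℝ) (σ : ℝ) : ℝ :=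
  max (max (|v i| + scrC γ i ρ e B) (|v' i| + scrC γ i ρ' e' B'))
      (|σ * v i + (1 - σ) * v' i| + max (scrC γ i ρ e B) (scrC γ i ρ' e' B'))
    + ffun ρ ρ' B B' σ

/-! Evaluate `α_i(U, Ũ; σ)` at `σ = ρ / (ρ + ρ̃)`, where the magnetic term becomes
`|B - B̃| / √(2(ρ + ρ̃))`. The convex combination of the velocities is bounded by
`max |v_i| |ṽ_i|`, and `max a b + max c d ≤ max (a + c) (b + d) + min |a - b| |c - d|`.
Finally `𝓒_i ≤ 𝒞_i`: `𝓒_s ≤ 𝒞_s`, and for `0 ≤ c ≤ b` the map `s ↦ s + b + √((s + b)² - 4sc)`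
is nondecreasing, being `t + √(t² + 4c(b - c)) + 2c` with `t = s + b - 2c`. -/

lemma abs_convex_combination_le_max {x y σ : ℝ} (h0 : 0 ≤ σ) (h1 : σ ≤ 1) :
    |σ * x + (1 - σ) * y| ≤ max |x| |y| := by
  simpa [Real.norm_eq_abs] using (convexOn_univ_norm (E := ℝ)).le_max_of_mem_segment
    trivial trivial ⟨σ, 1 - σ, h0, by linarith, by ring, rfl⟩

lemma max_add_max_le_max_add_add_min (x y u w : ℝ) :
    max x y + max u w ≤ max (x + u) (y + w) + min |x - y| |u - w| := by
  have := le_abs_self (x - y); have := neg_le_abs (x - y)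
  have := le_abs_self (u - w); have := neg_le_abs (u - w)
  have := le_max_left (x + u) (y + w); have := le_max_right (x + u) (y + w)
  rw [← min_add_add_left, le_min_iff]
  constructor <;> rcases max_cases x y with ⟨hx, _⟩ | ⟨hx, _⟩ <;>
    rcases max_cases u w with ⟨hu, _⟩ | ⟨hu, _⟩ <;> linarith

lemma monotone_add_sqrt_sq_add {k : ℝ} (hk : 0 ≤ k) :
    Monotone fun t : ℝ => t + √(t ^ 2 + k) := by
  intro t t' htt'
  have hroot : -t' ≤ √(t' ^ 2 + k) := (neg_le_abs t').trans (Real.abs_le_sqrt (by linarith))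
  have : √(t ^ 2 + k) ≤ t' - t + √(t' ^ 2 + k) := by
    rw [Real.sqrt_le_left (by linarith [Real.sqrt_nonneg (t' ^ 2 + k)])]
    nlinarith [Real.sq_sqrt (show 0 ≤ t' ^ 2 + k by positivity),
      mul_nonneg (sub_nonneg.2 htt') (neg_le_iff_add_nonneg.1 hroot)]
  dsimp only
  linarith

lemma add_add_sqrt_discrim_mono {b c s s' : ℝ} (hc : 0 ≤ c) (hcb : c ≤ b) (hs : s ≤ s') :
    s + b + √((s + b) ^ 2 - 4 * s * c) ≤ s' + b + √((s' + b) ^ 2 - 4 * s' * c) := by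
  have key (r : ℝ) : r + b + √((r + b) ^ 2 - 4 * r * c) =
      (r + b - 2 * c) + √((r + b - 2 * c) ^ 2 + 4 * c * (b - c)) + 2 * c := by
    ring_nf
  rw [key, key]
  gcongr ?_ + _
  exact monotone_add_sqrt_sq_add (by nlinarith) (by linarith : s + b - 2 * c ≤ s' + b - 2 * c)

lemma sq_scrCs {γ ρ e : ℝ} (hρ : ρ ≠ 0) (he : 0 < e) : scrCs γ ρ e ^ 2 = (γ - 1) ^ 2 * e / 2 := by
  rw [scrCs, div_pow, mul_pow ρ, Real.sq_sqrt (by positivity)]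
  field_simp

lemma sq_calCs {γ ρ e : ℝ} (hγ : 1 ≤ γ) (hρ : ρ ≠ 0) (he : 0 ≤ e) :
    calCs γ ρ e ^ 2 = γ * (γ - 1) * e := by
  have h : γ * ((γ - 1) * ρ * e) / ρ = γ * (γ - 1) * e := by field_simp
  rw [calCs, h, Real.sq_sqrt (mul_nonneg (mul_nonneg (by linarith) (by linarith)) he)]

lemma sq_scrCs_le_sq_calCs {γ ρ e : ℝ} (hγ : 1 < γ) (hρ : ρ ≠ 0) (he : 0 < e) :
    scrCs γ ρ e ^ 2 ≤ calCs γ ρ e ^ 2 := by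
  rw [sq_scrCs hρ he, sq_calCs hγ.le hρ he.le]
  nlinarith [mul_pos (sub_pos.2 hγ) he]

lemma sq_le_nsq (B : Fin 3 → ℝ) (i : Fin 3) : B i ^ 2 ≤ nsq B :=
  Finset.single_le_sum (fun j _ => sq_nonneg (B j)) (Finset.mem_univ i)

lemma nsq_sub_comm (B B' : Fin 3 → ℝ) : nsq (B - B') = nsq (B' - B) := by
  simp only [nsq, Pi.sub_apply]
  exact Finset.sum_congr rfl fun j _ => sub_sq_comm _ _

lemma scrC_le_calC {γ : ℝ} (hγ : 1 < γ) (i : Fin 3) {ρ e : ℝ} (B : Fin 3 → ℝ)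
    (hρ : 0 < ρ) (he : 0 < e) : scrC γ i ρ e B ≤ calC γ i ρ e B := by
  unfold scrC calC
  refine mul_le_mul_of_nonneg_left (Real.sqrt_le_sqrt ?_) (by positivity)
  simp only [mul_div_assoc]
  exact add_add_sqrt_discrim_mono (by positivity) (by gcongr; exact sq_le_nsq B i)
    (sq_scrCs_le_sq_calCs hγ hρ.ne' he)

lemma ffun_density_weight {ρ ρ' : ℝ} (hρ : 0 < ρ) (hρ' : 0 < ρ') (B B' : Fin 3 → ℝ) :
    ffun ρ ρ' B B' (ρ / (ρ + ρ')) = √(nsq (B - B')) / √(2 * (ρ + ρ')) := by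
  have hmin : (ρ / (ρ + ρ')) ^ 2 / ρ + (1 - ρ / (ρ + ρ')) ^ 2 / ρ' = (ρ + ρ')⁻¹ := by
    field_simp
    ring
  rw [ffun, hmin, nsq_sub_comm, Real.sqrt_inv, Real.sqrt_mul zero_le_two]
  ring

lemma max_wave_speed_le {x x' c c' σ : ℝ} (h0 : 0 ≤ σ) (h1 : σ ≤ 1) :
    max (max (|x| + c) (|x'| + c')) (|σ * x + (1 - σ) * x'| + max c c') ≤
      max (|x| + c) (|x'| + c') + min |(|x| - |x'|)| |c - c'| :=
  max_le (le_add_of_nonneg_right (le_min (abs_nonneg _) (abs_nonneg _))) <|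
    (add_le_add_left (abs_convex_combination_le_max h0 h1) _).trans
      (max_add_max_le_max_add_add_min _ _ _ _)

/-- α_i(U, Ũ) = inf_σ α_i(U, Ũ; σ) satisfies
α_i(U, Ũ) ≤ a_i + min{||v_i| - |ṽ_i||, |𝓒_i - 𝓒̃_i|} + |B - B̃|/√(2(ρ + ρ̃)),
where a_i = max{|v_i| + 𝒞_i, |ṽ_i| + 𝒞̃_i} is the spectral-radius bound. -/
theorem alpha_min_bound (γ : ℝ) (hγ : 1 < γ) (i : Fin 3)
    (ρ e ρ' e' : ℝ) (v B v' B' : Fin 3 → ℝ)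
    (hρ : 0 < ρ) (he : 0 < e) (hρ' : 0 < ρ') (he' : 0 < e') :
    sInf (Set.range (alphafun γ i ρ e ρ' e' v B v' B')) ≤
      max (|v i| + calC γ i ρ e B) (|v' i| + calC γ i ρ' e' B')
      + min (abs (|v i| - |v' i|)) (|scrC γ i ρ e B - scrC γ i ρ' e' B'|)
      + Real.sqrt (nsq (B - B')) / Real.sqrt (2 * (ρ + ρ')) := by
  have hbdd : BddBelow (Set.range (alphafun γ i ρ e ρ' e' v B v' B')) := by
    refine ⟨0, ?_⟩
    rintro _ ⟨σ, rfl⟩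
    unfold alphafun ffun scrC
    positivity
  have hσ₁ : ρ / (ρ + ρ') ≤ 1 := (div_le_one (by positivity)).2 (by linarith)
  calc sInf (Set.range (alphafun γ i ρ e ρ' e' v B v' B'))
      ≤ alphafun γ i ρ e ρ' e' v B v' B' (ρ / (ρ + ρ')) := csInf_le hbdd ⟨_, rfl⟩
    _ ≤ max (|v i| + scrC γ i ρ e B) (|v' i| + scrC γ i ρ' e' B')
          + min (abs (|v i| - |v' i|)) (|scrC γ i ρ e B - scrC γ i ρ' e' B'|)
          + √(nsq (B - B')) / √(2 * (ρ + ρ')) := by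
      rw [alphafun, ffun_density_weight hρ hρ']
      gcongr ?_ + _
      exact max_wave_speed_le (by positivity) hσ₁
    _ ≤ _ := by
      gcongr ?_ + _ + _
      exact max_le_max (by grw [scrC_le_calC hγ i B hρ he])
        (by grw [scrC_le_calC hγ i B' hρ' he'])

end
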